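/- Let n ≥ 3, 0 < m < 1, 0 < γ < 2/(2−m), R > 0, η > 0. Define W(s) = η s^{n−γ} and M_* = γ / (η (R^γ + η(n−γ))^{1−m} R^{2−γ(2−m)}). Then for every M ∈ (0, M_*] and every s ∈ (0,R), one has s^{n-1}(1 + s^{-n+1} W'(s))^{m-1} · d/ds(s^{-n+1} W'(s)) + M s^{-n+1} W(s) W'(s) ≤ 0. -/
import Mathlib

open MeasureTheory intervalIntegral Real Set

theorem stmt_3 (n : ℕ) (hn : 3 ≤ n) (m γ R η : ℝ)
    (hm : 0 < m) (hm1 : m < 1) (hγ : 0 < γ) (hγ2 : γ < 2 / (2 - m))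
    (hR : 0 < R) (hη : 0 < η) :
    ∀ M : ℝ, 0 < M →
      M ≤ γ / (η * (R ^ γ + η * ((n:ℝ) - γ)) ^ (1-m) * R ^ (2 - γ*(2-m))) →
      ∀ s ∈ Ioo (0:ℝ) R,
        s ^ ((n:ℝ)-1) *
          (1 + s ^ (1-(n:ℝ)) * deriv (fun ρ => η * ρ ^ ((n:ℝ)-γ)) s) ^ (m-1) *
          deriv (fun r => r ^ (1-(n:ℝ)) * deriv (fun ρ => η * ρ ^ ((n:ℝ)-γ)) r) s
        + M * s ^ (1-(n:ℝ)) * (η * s ^ ((n:ℝ)-γ)) *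
            deriv (fun ρ => η * ρ ^ ((n:ℝ)-γ)) s ≤ 0 := by
  intro M hM hMle s hs
  obtain ⟨hs0, hsR⟩ := hs
  set p : ℝ := (n:ℝ) - γ with hp
  set A : ℝ := η * ((n:ℝ) - γ) with hA
  have h2m : 1 < 2 - m := by linarith
  have hγ2'' : γ * (2 - m) < 2 := (lt_div_iff₀ (by linarith)).mp hγ2
  have hγ2' : γ < 2 := by nlinarith
  have hn3 : (3:ℝ) ≤ (n:ℝ) := by exact_mod_cast hn
  have hpγ : 0 < p := by simp only [hp]; linarith
  have hApos : 0 < A := by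
    rw [hA]; exact mul_pos hη (by linarith)
  -- derivative of the inner function
  have hderiv : ∀ x : ℝ, 0 < x →
      deriv (fun ρ => η * ρ ^ ((n:ℝ)-γ)) x = A * x ^ (p - 1) := by
    intro x hx
    have h := (Real.hasDerivAt_rpow_const (x := x) (p := (n:ℝ)-γ) (Or.inl hx.ne')).const_mul η
    rw [h.deriv, hA, hp]
    ring
  have hexp : (1 - (n:ℝ)) + (p - 1) = -γ := by rw [hp]; ring
  -- outer function is eventually A * r ^ (-γ)
  have hEq : (fun r => r ^ (1-(n:ℝ)) * deriv (fun ρ => η * ρ ^ ((n:ℝ)-γ)) r)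
      =ᶠ[nhds s] fun r => A * r ^ (-γ) := by
    filter_upwards [Ioi_mem_nhds hs0] with r hr
    rw [hderiv r hr, ← mul_assoc, mul_comm (r ^ (1-(n:ℝ))) A, mul_assoc,
      ← Real.rpow_add hr, hexp]
  have d2 : deriv (fun r => r ^ (1-(n:ℝ)) * deriv (fun ρ => η * ρ ^ ((n:ℝ)-γ)) r) s
      = A * (-γ * s ^ (-γ - 1)) := by
    rw [hEq.deriv_eq]
    exact ((Real.hasDerivAt_rpow_const (x := s) (p := -γ) (Or.inl hs0.ne')).const_mul A).deriv
  rw [hderiv s hs0, d2]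
  -- simplify the base of the power
  have hsγ : (0:ℝ) < s ^ γ := Real.rpow_pos_of_pos hs0 γ
  have h1 : s ^ (1-(n:ℝ)) * (A * s ^ (p - 1)) = A * s ^ (-γ) := by
    rw [← mul_assoc, mul_comm (s ^ (1-(n:ℝ))) A, mul_assoc, ← Real.rpow_add hs0, hexp]
  have h2 : 1 + s ^ (1-(n:ℝ)) * (A * s ^ (p - 1)) = s ^ (-γ) * (s ^ γ + A) := by
    rw [h1, mul_add, ← Real.rpow_add hs0]
    simp [mul_comm]
  rw [h2]
  have hsum : 0 < s ^ γ + A := by linarith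
  have h3 : (s ^ (-γ) * (s ^ γ + A)) ^ (m-1)
      = s ^ (γ*(1-m)) * (s ^ γ + A) ^ (m-1) := by
    rw [Real.mul_rpow (Real.rpow_nonneg hs0.le _) hsum.le, ← Real.rpow_mul hs0.le,
      show (-γ)*(m-1) = γ*(1-m) by ring]
  rw [h3]
  set B : ℝ := (s ^ γ + A) ^ (m-1) with hBdef
  have hBpos : 0 < B := Real.rpow_pos_of_pos hsum _
  -- exponent bookkeeping
  have hc : s ^ ((n:ℝ)-1) * s ^ (γ*(1-m)) * s ^ (-γ-1)
      = s ^ ((n:ℝ)-2*γ) * s ^ (γ*(2-m)-2) := by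
    rw [← Real.rpow_add hs0, ← Real.rpow_add hs0, ← Real.rpow_add hs0]
    congr 1; ring
  have hd : s ^ (1-(n:ℝ)) * s ^ ((n:ℝ)-γ) * s ^ (p-1) = s ^ ((n:ℝ)-2*γ) := by
    rw [← Real.rpow_add hs0, ← Real.rpow_add hs0]
    congr 1; rw [hp]; ring
  -- key inequality
  have e1 : γ*(2-m)-2 ≤ 0 := by linarith
  have m1 : R ^ (γ*(2-m)-2) ≤ s ^ (γ*(2-m)-2) :=
    Real.rpow_le_rpow_of_nonpos hs0 hsR.le e1
  have hRγ : s ^ γ ≤ R ^ γ := Real.rpow_le_rpow hs0.le hsR.le hγ.le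
  have m2 : (R ^ γ + A) ^ (m-1) ≤ B :=
    Real.rpow_le_rpow_of_nonpos hsum (by linarith) (by linarith)
  have hRsum : 0 < R ^ γ + A := lt_of_lt_of_le hsum (by linarith)
  have hX : (0:ℝ) < (R ^ γ + A) ^ (1-m) := Real.rpow_pos_of_pos hRsum _
  have hY : (0:ℝ) < R ^ (2 - γ*(2-m)) := Real.rpow_pos_of_pos hR _
  have i1 : (R ^ γ + A) ^ (m-1) = ((R ^ γ + A) ^ (1-m))⁻¹ := by
    rw [show m-1 = -(1-m) by ring, Real.rpow_neg hRsum.le]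
  have i2 : R ^ (γ*(2-m)-2) = (R ^ (2 - γ*(2-m)))⁻¹ := by
    rw [show γ*(2-m)-2 = -(2-γ*(2-m)) by ring, Real.rpow_neg hR.le]
  have hMη : M * η ≤ γ * R ^ (γ*(2-m)-2) * (R ^ γ + A) ^ (m-1) := by
    have h := mul_le_mul_of_nonneg_right hMle hη.le
    calc M * η ≤ γ / (η * (R ^ γ + A) ^ (1-m) * R ^ (2 - γ*(2-m))) * η := h
      _ = γ * R ^ (γ*(2-m)-2) * (R ^ γ + A) ^ (m-1) := by
          rw [i1, i2]; field_simp
  have key : M * η ≤ γ * s ^ (γ*(2-m)-2) * B := by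
    have hspos : (0:ℝ) < s ^ (γ*(2-m)-2) := Real.rpow_pos_of_pos hs0 _
    have hRB : (0:ℝ) < (R ^ γ + A) ^ (m-1) := Real.rpow_pos_of_pos hRsum _
    nlinarith [mul_le_mul m1 m2 hRB.le hspos.le]
  -- put it together
  have heq : s ^ ((n:ℝ)-1) * (s ^ (γ*(1-m)) * B) * (A * (-γ * s ^ (-γ-1)))
      + M * s ^ (1-(n:ℝ)) * (η * s ^ ((n:ℝ)-γ)) * (A * s ^ (p-1))
      = A * s ^ ((n:ℝ)-2*γ) * (M * η - γ * s ^ (γ*(2-m)-2) * B) := by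
    linear_combination (-(γ * A * B)) * hc + (M * η * A) * hd
  rw [heq]
  exact mul_nonpos_of_nonneg_of_nonpos (by positivity) (by linarith)
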